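/- arXiv:0704.0215 — 5 statements merged into one kernel-verified Lean document; each statement's English description precedes it below -/
import Mathlib

section
/- Let a₁ ∈ ℝ^{n₁} and a₂ ∈ ℝ^{n₂} be irreducible vectors whose means satisfy mean(a₁) > mean(a₂). Then the concatenated vector (a₁, a₂) ∈ ℝ^{n₁+n₂} is irreducible. -/
/-!
Cutting a vector at `k`, its mean is the mediant of the prefix and suffix means, so "prefix mean
> suffix mean" is equivalent both to "prefix mean > total mean" and to "suffix mean < total mean".
The mean `M` of `(a₁, a₂)` lies strictly between `mean a₂` and `mean a₁`. A cut inside `a₁` leaves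
a prefix of `a₁` on the left, whose mean is at least `mean a₁ > M`; a cut inside `a₂` leaves a
suffix of `a₂` on the right, whose mean is less than `mean a₂ < M`.
-/

open Finset

/-- arithmetic mean of the first `m` coordinates. -/
noncomputable def vecMean (m : ℕ) (a : ℕ → ℝ) : ℝ :=
  (∑ i ∈ Finset.range m, a i) / (m : ℝ)

/-- a vector of length `m` (0-indexed) is irreducible if every prefix mean strictly
exceeds the corresponding suffix mean. -/
def IrreducibleVec (m : ℕ) (a : ℕ → ℝ) : Prop :=
  ∀ k, 0 < k → k < m →
    (∑ i ∈ Finset.range k, a i) / (k : ℝ) >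
      (∑ i ∈ Finset.Ico k m, a i) / ((m : ℝ) - (k : ℝ))

section Mediant

variable {α : Type*} [Field α] [LinearOrder α] [IsStrictOrderedRing α] {x y p q : α}

theorem add_div_add_lt_div_iff (hp : 0 < p) (hq : 0 < q) :
    (x + y) / (p + q) < x / p ↔ y / q < x / p := by
  rw [div_lt_div_iff₀ (add_pos hp hq) hp, div_lt_div_iff₀ hq hp]
  constructor <;> intro h <;> linarith

theorem div_lt_add_div_add_iff (hp : 0 < p) (hq : 0 < q) :
    y / q < (x + y) / (p + q) ↔ y / q < x / p := by
  rw [div_lt_div_iff₀ hq (add_pos hp hq), div_lt_div_iff₀ hq hp]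
  constructor <;> intro h <;> linarith

end Mediant

noncomputable def suffixMean (m k : ℕ) (a : ℕ → ℝ) : ℝ :=
  (∑ i ∈ Finset.Ico k m, a i) / ((m : ℝ) - (k : ℝ))

theorem irreducibleVec_iff {m : ℕ} {a : ℕ → ℝ} :
    IrreducibleVec m a ↔ ∀ k, 0 < k → k < m → suffixMean m k a < vecMean k a :=
  Iff.rfl

section Split

variable {m k : ℕ} {a : ℕ → ℝ}

theorem vecMean_eq_add_div_add (hk : k ≤ m) :
    vecMean m a = ((∑ i ∈ range k, a i) + ∑ i ∈ Ico k m, a i) / ((k : ℝ) + ((m : ℝ) - k)) := by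
  rw [sum_range_add_sum_Ico a hk, add_sub_cancel]
  rfl

theorem vecMean_lt_vecMean_iff (hk : 0 < k) (hkm : k < m) :
    vecMean m a < vecMean k a ↔ suffixMean m k a < vecMean k a := by
  rw [vecMean_eq_add_div_add hkm.le]
  exact add_div_add_lt_div_iff (by exact_mod_cast hk) (sub_pos.2 (by exact_mod_cast hkm))

theorem suffixMean_lt_vecMean_iff (hk : 0 < k) (hkm : k < m) :
    suffixMean m k a < vecMean m a ↔ suffixMean m k a < vecMean k a := by
  rw [vecMean_eq_add_div_add hkm.le]
  exact div_lt_add_div_add_iff (by exact_mod_cast hk) (sub_pos.2 (by exact_mod_cast hkm))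

theorem IrreducibleVec.vecMean_le_vecMean (h : IrreducibleVec m a) (hk : 0 < k) (hkm : k ≤ m) :
    vecMean m a ≤ vecMean k a := by
  rcases hkm.lt_or_eq with hkm | rfl
  · exact ((vecMean_lt_vecMean_iff hk hkm).2 (h k hk hkm)).le
  · exact le_rfl

theorem IrreducibleVec.suffixMean_lt_vecMean (h : IrreducibleVec m a) (hk : 0 < k) (hkm : k < m) :
    suffixMean m k a < vecMean m a :=
  (suffixMean_lt_vecMean_iff hk hkm).2 (h k hk hkm)

end Split

def concatVec (n₁ : ℕ) (a₁ a₂ : ℕ → ℝ) : ℕ → ℝ :=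
  fun i => if i < n₁ then a₁ i else a₂ (i - n₁)

section Concat

variable {n₁ n₂ : ℕ} {a₁ a₂ : ℕ → ℝ}

theorem concatVec_add (j : ℕ) : concatVec n₁ a₁ a₂ (n₁ + j) = a₂ j := by
  simp [concatVec]

theorem sum_range_concatVec_of_le {k : ℕ} (hk : k ≤ n₁) :
    ∑ i ∈ range k, concatVec n₁ a₁ a₂ i = ∑ i ∈ range k, a₁ i :=
  sum_congr rfl fun _ hi => if_pos ((mem_range.1 hi).trans_le hk)

theorem vecMean_concatVec_of_le {k : ℕ} (hk : k ≤ n₁) :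
    vecMean k (concatVec n₁ a₁ a₂) = vecMean k a₁ := by
  rw [vecMean, sum_range_concatVec_of_le hk, vecMean]

theorem vecMean_concatVec :
    vecMean (n₁ + n₂) (concatVec n₁ a₁ a₂) =
      ((∑ i ∈ range n₁, a₁ i) + ∑ i ∈ range n₂, a₂ i) / ((n₁ : ℝ) + n₂) := by
  rw [vecMean, sum_range_add, sum_range_concatVec_of_le le_rfl, Nat.cast_add]
  simp only [concatVec_add]

theorem suffixMean_concatVec (j : ℕ) :
    suffixMean (n₁ + n₂) (n₁ + j) (concatVec n₁ a₁ a₂) = suffixMean n₂ j a₂ := by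
  unfold suffixMean
  rw [add_comm n₁ j, add_comm n₁ n₂, ← sum_Ico_add']
  simp only [add_comm _ n₁, concatVec_add]
  push_cast
  ring_nf

theorem vecMean_concatVec_mem_Ioo (h₁ : 0 < n₁) (h₂ : 0 < n₂)
    (h : vecMean n₂ a₂ < vecMean n₁ a₁) :
    vecMean (n₁ + n₂) (concatVec n₁ a₁ a₂) ∈ Set.Ioo (vecMean n₂ a₂) (vecMean n₁ a₁) := by
  have hp : (0 : ℝ) < n₁ := by exact_mod_cast h₁
  have hq : (0 : ℝ) < n₂ := by exact_mod_cast h₂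
  rw [vecMean_concatVec]
  exact ⟨(div_lt_add_div_add_iff hp hq).2 h, (add_div_add_lt_div_iff hp hq).2 h⟩

end Concat

theorem stmt1 (n₁ n₂ : ℕ) (h₁ : 0 < n₁) (h₂ : 0 < n₂) (a₁ a₂ : ℕ → ℝ)
    (hi₁ : IrreducibleVec n₁ a₁) (hi₂ : IrreducibleVec n₂ a₂)
    (hmean : vecMean n₁ a₁ > vecMean n₂ a₂) :
    IrreducibleVec (n₁ + n₂) (fun i => if i < n₁ then a₁ i else a₂ (i - n₁)) := by
  change IrreducibleVec (n₁ + n₂) (concatVec n₁ a₁ a₂)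
  rw [irreducibleVec_iff]
  obtain ⟨hM₂, hM₁⟩ := vecMean_concatVec_mem_Ioo h₁ h₂ hmean
  intro k hk hkm
  rcases le_or_gt k n₁ with hkn | hkn
  · rw [← vecMean_lt_vecMean_iff hk hkm, vecMean_concatVec_of_le hkn]
    exact hM₁.trans_le (hi₁.vecMean_le_vecMean hk hkn)
  · obtain ⟨j, rfl⟩ := Nat.exists_eq_add_of_le hkn.le
    rw [← suffixMean_lt_vecMean_iff hk hkm, suffixMean_concatVec]
    exact (hi₂.suffixMean_lt_vecMean (by omega) (by omega)).trans hM₂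
end

section
/- For each vector a ∈ ℝ^n, there exists a partition of a into consecutive blocks (a_{m_0+1},...,a_{m_1}), (a_{m_1+1},...,a_{m_2}), ..., (a_{m_{q-1}+1},...,a_{m_q}) with 0 = m_0 < m_1 < ... < m_q = n, such that each block is irreducible and the block means f^1 ≤ f^2 ≤ ... ≤ f^q are nondecreasing. -/
/-!
Let the first block end at the first minimiser `c` of the prefix means
`k ↦ mean (a₀,…,a_{k-1})`. Every shorter prefix has a strictly larger mean than `[0, c)`,
which (the mean of `[0, c)` being a weighted average of a prefix and the matching suffix)
makes the block irreducible. Partition the remaining `n - c` entries recursively; the prefix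
ending with the second block has mean at least that of `[0, c)`, so the second block mean is
at least the first.
-/

open Finset

/-- mean of the block `a_i, ..., a_{j-1}` (0-indexed, half-open). -/
noncomputable def blockMean (a : ℕ → ℝ) (i j : ℕ) : ℝ :=
  (∑ l ∈ Finset.Ico i j, a l) / ((j : ℝ) - (i : ℝ))

/-- a partition of `(a_0, ..., a_{n-1})` into `q` consecutive blocks with endpoints
`0 = m 0 < m 1 < ... < m q = n` is stable if each block is irreducible and the block
means are nondecreasing. -/
def IsStablePartition (n q : ℕ) (a : ℕ → ℝ) (m : ℕ → ℕ) : Prop :=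
  0 < q ∧ m 0 = 0 ∧ m q = n ∧ (∀ i < q, m i < m (i + 1)) ∧
  (∀ i < q, IrreducibleVec (m (i + 1) - m i) (fun j => a (m i + j))) ∧
  (∀ i, i + 1 < q → blockMean a (m i) (m (i + 1)) ≤ blockMean a (m (i + 1)) (m (i + 2)))

lemma Finset.exists_first_min_image {β : Type*} [LinearOrder β] (s : Finset ℕ) (f : ℕ → β)
    (hs : s.Nonempty) :
    ∃ k ∈ s, (∀ j ∈ s, f k ≤ f j) ∧ ∀ j ∈ s, j < k → f k < f j := by
  set t := s.filter fun k => ∀ j ∈ s, f k ≤ f j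
  have ht : t.Nonempty := by
    obtain ⟨k, hk, hmin⟩ := s.exists_min_image f hs
    exact ⟨k, mem_filter.2 ⟨hk, hmin⟩⟩
  obtain ⟨hk, hmin⟩ := mem_filter.1 (t.min'_mem ht)
  refine ⟨t.min' ht, hk, hmin, fun j hj hjk => lt_of_not_ge fun hle => ?_⟩
  exact (t.min'_le j (mem_filter.2 ⟨hj, fun l hl => hle.trans (hmin l hl)⟩)).not_gt hjk

namespace blockMean

variable (a : ℕ → ℝ)

lemma zero_left (k : ℕ) : blockMean a 0 k = (∑ i ∈ range k, a i) / k := by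
  simp [blockMean, Nat.Ico_zero_eq_range]

lemma shift (c i j : ℕ) :
    blockMean (fun t => a (c + t)) i j = blockMean a (i + c) (j + c) := by
  simp only [blockMean, sum_Ico_add, Nat.cast_add]
  ring_nf

lemma sub_mul_eq_sum {i j : ℕ} (hij : i ≤ j) :
    ((j : ℝ) - i) * blockMean a i j = ∑ l ∈ Ico i j, a l := by
  rcases hij.eq_or_lt with rfl | hlt
  · simp
  · have : (i : ℝ) < j := by exact_mod_cast hlt
    exact mul_div_cancel₀ _ (sub_ne_zero.2 this.ne')

/-- The mean of `[i, k)` is a weighted average of the means of `[i, j)` and `[j, k)`, so the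
right mean lies on the same side of the left mean as the mean of the union. -/
lemma sub_mul_sub_eq {i j k : ℕ} (hij : i ≤ j) (hjk : j ≤ k) :
    ((k : ℝ) - j) * (blockMean a j k - blockMean a i j) =
      ((k : ℝ) - i) * (blockMean a i k - blockMean a i j) := by
  have hsplit := sum_Ico_consecutive a hij hjk
  rw [← sub_mul_eq_sum a hij, ← sub_mul_eq_sum a hjk, ← sub_mul_eq_sum a (hij.trans hjk)]
    at hsplit
  linear_combination hsplit

lemma right_lt_left_of_union_lt_left {i j k : ℕ} (hij : i < j) (hjk : j < k)
    (h : blockMean a i k < blockMean a i j) : blockMean a j k < blockMean a i j := by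
  have key := sub_mul_sub_eq a hij.le hjk.le
  have hkj : (0 : ℝ) < (k : ℝ) - j := sub_pos.2 (by exact_mod_cast hjk)
  have hki : (0 : ℝ) < (k : ℝ) - i := sub_pos.2 (by exact_mod_cast hij.trans hjk)
  nlinarith

lemma left_le_right_of_left_le_union {i j k : ℕ} (hij : i < j) (hjk : j < k)
    (h : blockMean a i j ≤ blockMean a i k) : blockMean a i j ≤ blockMean a j k := by
  have key := sub_mul_sub_eq a hij.le hjk.le
  have hkj : (0 : ℝ) < (k : ℝ) - j := sub_pos.2 (by exact_mod_cast hjk)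
  have hki : (0 : ℝ) < (k : ℝ) - i := sub_pos.2 (by exact_mod_cast hij.trans hjk)
  nlinarith

end blockMean

lemma irreducibleVec_of_forall_lt {m : ℕ} {a : ℕ → ℝ}
    (h : ∀ k, 0 < k → k < m → blockMean a 0 m < blockMean a 0 k) : IrreducibleVec m a := by
  intro k hk hkm
  rw [gt_iff_lt, ← blockMean.zero_left]
  exact blockMean.right_lt_left_of_union_lt_left a hk hkm (h k hk hkm)

def prependBlock (c : ℕ) (m : ℕ → ℕ) : ℕ → ℕ
  | 0 => 0
  | j + 1 => m j + c

namespace IsStablePartition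

variable {n q : ℕ} {a : ℕ → ℝ} {m : ℕ → ℕ}

lemma apply_le (h : IsStablePartition n q a m) {i : ℕ} (hi : i ≤ q) : m i ≤ n := by
  obtain ⟨-, -, hq, hlt, -⟩ := h
  have key : ∀ d ≤ q, m (q - d) ≤ n := by
    intro d
    induction d with
    | zero => simp [hq]
    | succ d ih =>
      intro hd
      have := hlt (q - (d + 1)) (by omega)
      rw [show q - (d + 1) + 1 = q - d by omega] at this
      exact this.le.trans (ih (by omega))
  simpa [Nat.sub_sub_self hi] using key (q - i) (by omega)

lemma single (hn : 0 < n) (hirr : IrreducibleVec n a) :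
    IsStablePartition n 1 a (prependBlock n fun _ => 0) := by
  refine ⟨one_pos, rfl, zero_add n, ?_, ?_, fun i hi => by omega⟩ <;>
    intro i hi <;> obtain rfl : i = 0 := by omega
  · simpa [prependBlock] using hn
  · simpa [prependBlock] using hirr

lemma prepend {c : ℕ} (hc : 0 < c) (hirr : IrreducibleVec c a)
    (hmean : blockMean a 0 c ≤ blockMean a c (m 1 + c))
    (h : IsStablePartition n q (fun t => a (c + t)) m) :
    IsStablePartition (n + c) (q + 1) a (prependBlock c m) := by
  obtain ⟨hq, h0, hn, hlt, hirr', hmean'⟩ := h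
  refine ⟨q.succ_pos, rfl, by simp [prependBlock, hn], ?_, ?_, ?_⟩
  · rintro (_ | j) hj
    · simpa [prependBlock, h0] using hc
    · simpa [prependBlock] using hlt j (by omega)
  · rintro (_ | j) hj
    · simpa [prependBlock, h0] using hirr
    · simp only [prependBlock, Nat.add_sub_add_right]
      convert hirr' j (by omega) using 2
      ring_nf
  · rintro (_ | j) hj
    · simpa [prependBlock, h0] using hmean
    · simpa [prependBlock, blockMean.shift] using hmean' j (by omega)

end IsStablePartition

theorem stmt2 (n : ℕ) (hn : 0 < n) (a : ℕ → ℝ) :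
    ∃ q : ℕ, ∃ m : ℕ → ℕ, IsStablePartition n q a m := by
  induction n using Nat.strong_induction_on generalizing a with
  | _ n ih =>
  obtain ⟨c, hc, hmin, hfirst⟩ :=
    (Icc 1 n).exists_first_min_image (blockMean a 0) ⟨n, mem_Icc.2 ⟨hn, le_rfl⟩⟩
  rw [mem_Icc] at hc
  have hirr : IrreducibleVec c a := irreducibleVec_of_forall_lt fun k hk hkc =>
    hfirst k (mem_Icc.2 ⟨hk, by omega⟩) hkc
  rcases hc.2.eq_or_lt with rfl | hcn
  · exact ⟨1, _, .single hn hirr⟩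
  obtain ⟨q, m, hm⟩ := ih (n - c) (by omega) (by omega) fun t => a (c + t)
  have hm1 : 0 < m 1 := hm.2.1 ▸ hm.2.2.2.1 0 hm.1
  have hm1n : m 1 ≤ n - c := hm.apply_le hm.1
  have hmean : blockMean a 0 c ≤ blockMean a c (m 1 + c) :=
    blockMean.left_le_right_of_left_le_union a hc.1 (by omega)
      (hmin _ (mem_Icc.2 ⟨by omega, by omega⟩))
  refine ⟨q + 1, prependBlock c m, ?_⟩
  simpa [Nat.sub_add_cancel hc.2] using hm.prepend hc.1 hirr hmean
end

section
/- In a stable partition of a ∈ ℝ^n with block endpoints m_0 = 0 < m_1 < ... < m_q = n and block means f^1 ≤ ... ≤ f^q, for each block index i and each k ≥ 1 with m_{i-1} + k ≤ n, the mean of the entries a_{m_{i-1}+1}, ..., a_{m_{i-1}+k} is at least f^i (the mean of block i). -/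
open Finset

/-! The mean of a prefix of an irreducible block is at least the block mean, since the block mean is
a weighted average of the prefix mean and the (smaller) suffix mean. A prefix starting at block `i`
and reaching into block `j` splits into the complete blocks `i, …, j - 1` and a prefix of block `j`;
each piece has mean at least `f^i` because the block means are nondecreasing, and a mean of
consecutive pieces is a weighted average of their means. -/

section blockMean

variable {a : ℕ → ℝ} {i j s : ℕ}

lemma le_blockMean_iff (hij : i < j) {c : ℝ} :
    c ≤ blockMean a i j ↔ c * ((j : ℝ) - i) ≤ ∑ l ∈ Ico i j, a l := by
  rw [blockMean, le_div_iff₀ (sub_pos.mpr (Nat.cast_lt.mpr hij))]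

lemma blockMean_le_iff (hij : i < j) {c : ℝ} :
    blockMean a i j ≤ c ↔ ∑ l ∈ Ico i j, a l ≤ c * ((j : ℝ) - i) := by
  rw [blockMean, div_le_iff₀ (sub_pos.mpr (Nat.cast_lt.mpr hij))]

lemma le_blockMean_of_le_of_le {c : ℝ} (hij : i < j) (hjs : j < s)
    (h₁ : c ≤ blockMean a i j) (h₂ : c ≤ blockMean a j s) : c ≤ blockMean a i s := by
  rw [le_blockMean_iff hij] at h₁
  rw [le_blockMean_iff hjs] at h₂
  rw [le_blockMean_iff (hij.trans hjs), ← sum_Ico_consecutive _ hij.le hjs.le]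
  linarith [show c * ((s : ℝ) - i) = c * ((j : ℝ) - i) + c * ((s : ℝ) - j) by ring]

lemma blockMean_le_of_le_of_le {c : ℝ} (hij : i < j) (hjs : j < s)
    (h₁ : blockMean a i j ≤ c) (h₂ : blockMean a j s ≤ c) : blockMean a i s ≤ c := by
  rw [blockMean_le_iff hij] at h₁
  rw [blockMean_le_iff hjs] at h₂
  rw [blockMean_le_iff (hij.trans hjs), ← sum_Ico_consecutive _ hij.le hjs.le]
  linarith [show c * ((s : ℝ) - i) = c * ((j : ℝ) - i) + c * ((s : ℝ) - j) by ring]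

lemma blockMean_comp_add (a : ℕ → ℝ) (i j s : ℕ) :
    blockMean (fun t => a (i + t)) j s = blockMean a (i + j) (i + s) := by
  simp only [blockMean, add_comm i, ← sum_Ico_add']
  push_cast
  ring

end blockMean

lemma IrreducibleVec.blockMean_le_prefix {M : ℕ} {b : ℕ → ℝ} (h : IrreducibleVec M b) {k : ℕ}
    (hk : 0 < k) (hkM : k ≤ M) : blockMean b 0 M ≤ blockMean b 0 k := by
  rcases hkM.eq_or_lt with rfl | hlt
  · exact le_rfl
  refine blockMean_le_of_le_of_le hk hlt le_rfl ?_
  simp only [blockMean, Nat.cast_zero, sub_zero, ← range_eq_Ico]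
  exact (h k hk hlt).le

namespace IsStablePartition

variable {n q : ℕ} {a : ℕ → ℝ} {m : ℕ → ℕ}

lemma strictMonoOn (h : IsStablePartition n q a m) : StrictMonoOn m (Set.Iic q) :=
  strictMonoOn_of_lt_add_one Set.ordConnected_Iic fun u _ _ hu => h.2.2.2.1 u (Set.mem_Iic.mp hu)

lemma blockMean_monotoneOn (h : IsStablePartition n q a m) :
    MonotoneOn (fun j => blockMean a (m j) (m (j + 1))) (Set.Iio q) :=
  monotoneOn_of_le_add_one Set.ordConnected_Iio fun u _ _ hu => h.2.2.2.2.2 u (Set.mem_Iio.mp hu)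

lemma blockMean_le_blockMean_of_mem_block (h : IsStablePartition n q a m) {j s : ℕ} (hj : j < q)
    (hs₁ : m j < s) (hs₂ : s ≤ m (j + 1)) :
    blockMean a (m j) (m (j + 1)) ≤ blockMean a (m j) s := by
  have hlt := h.2.2.2.1 j hj
  have := (h.2.2.2.2.1 j hj).blockMean_le_prefix (k := s - m j) (by omega) (by omega)
  rwa [blockMean_comp_add, blockMean_comp_add, add_zero, Nat.add_sub_cancel' hlt.le,
    Nat.add_sub_cancel' hs₁.le] at this

lemma blockMean_le_blockMean_prefix (h : IsStablePartition n q a m) {i s : ℕ} (hi : i < q)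
    (hs₁ : m i < s) (hs₂ : s ≤ n) :
    blockMean a (m i) (m (i + 1)) ≤ blockMean a (m i) s := by
  suffices ∀ j, i ≤ j → j < q → ∀ s, m i < s → s ≤ m (j + 1) →
      blockMean a (m i) (m (i + 1)) ≤ blockMean a (m i) s from
    this (q - 1) (by omega) (by omega) s hs₁ (by rwa [Nat.sub_add_cancel h.1, h.2.2.1])
  intro j hij
  induction j, hij using Nat.le_induction with
  | base => exact fun _ s => h.blockMean_le_blockMean_of_mem_block hi
  | succ j hij ih =>
    intro hj s hs₁ hs₂
    rcases le_or_gt s (m (j + 1)) with hs | hs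
    · exact ih (by omega) s hs₁ hs
    have hmi : m i < m (j + 1) :=
      h.strictMonoOn (Set.mem_Iic.mpr hi.le) (Set.mem_Iic.mpr hj.le) (by omega)
    refine le_blockMean_of_le_of_le hmi hs (ih (by omega) _ hmi le_rfl) ?_
    exact (h.blockMean_monotoneOn hi hj (by omega)).trans
      (h.blockMean_le_blockMean_of_mem_block hj hs hs₂)

end IsStablePartition

theorem stmt4 (n q : ℕ) (a : ℕ → ℝ) (m : ℕ → ℕ)
    (hsp : IsStablePartition n q a m) (i : ℕ) (hi : i < q) (k : ℕ) (hk : 1 ≤ k)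
    (hkn : m i + k ≤ n) :
    blockMean a (m i) (m i + k) ≥ blockMean a (m i) (m (i + 1)) :=
  hsp.blockMean_le_blockMean_prefix hi (by omega) hkn
end

section
/- Let A be the n×n real matrix with A_{i,i} = −1 and A_{i,i+1} = 1 for 1 ≤ i ≤ n−1, all other entries of the first n−1 rows zero, and last row all ones. Then A is invertible and the (k,l) entry of (A^{-1})^T A^{-1} equals (1/n)·k·(n−l) for k ≤ l ≤ n−1, is symmetric, and its (n,n) entry equals 1/n with all other entries in the last row and column equal to 0. -/
/-!
Rows `1, …, n-1` of `A` take successive differences and the last row takes the sum. So for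
`j < n - 1` the `j`-th column of `A⁻¹` is the indicator of `{i | j < i}` minus its mean (its
differences give `e_j`, its sum is `0`), and the last column is the constant `1/n`.
The entries of `(A⁻¹)ᵀ A⁻¹` are the inner products of these columns. Centred vectors satisfy
`⟪u - ū, w - w̄⟫ = ⟪u, w⟫ - (∑ u)(∑ w)/n`, which for the two indicators is
`(n-1-l) - (n-1-k)(n-1-l)/n = (k+1)(n-1-l)/n`, and they are orthogonal to constants.
-/

open Matrix

/-- The matrix with rows `e_{i+1} - e_i` for `i = 1, ..., n-1` and last row all ones. -/
noncomputable def Amat (n : ℕ) : Matrix (Fin n) (Fin n) ℝ :=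
  Matrix.of fun i j =>
    if (i : ℕ) = n - 1 then 1
    else if (j : ℕ) = (i : ℕ) then -1
    else if (j : ℕ) = (i : ℕ) + 1 then 1
    else 0

section Centered

variable {ι : Type*} [Fintype ι]

noncomputable def centered (v : ι → ℝ) : ι → ℝ :=
  v - ((∑ i, v i) / Fintype.card ι) • 1

lemma centered_apply_sub_centered_apply (v : ι → ℝ) (a b : ι) :
    centered v a - centered v b = v a - v b := by
  simp only [centered, Pi.sub_apply, Pi.smul_apply, Pi.one_apply]
  ring

variable [Nonempty ι]

lemma centered_dotProduct_one (v : ι → ℝ) : centered v ⬝ᵥ 1 = 0 := by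
  rw [centered, sub_dotProduct, smul_dotProduct, one_dotProduct_one, dotProduct_one, smul_eq_mul]
  field_simp
  ring

lemma centered_dotProduct_centered (v w : ι → ℝ) :
    centered v ⬝ᵥ centered w = v ⬝ᵥ w - (∑ i, v i) * (∑ i, w i) / Fintype.card ι := by
  rw [centered.eq_1 w, dotProduct_sub, dotProduct_smul, centered_dotProduct_one, smul_zero,
    sub_zero, centered, sub_dotProduct, smul_dotProduct, one_dotProduct, smul_eq_mul,
    mul_div_right_comm]

end Centered

section InvAmat

variable {n : ℕ}

def tailIndicator (j : Fin n) : Fin n → ℝ := fun i => if j < i then 1 else 0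

lemma sum_tailIndicator (j : Fin n) : ∑ i, tailIndicator j i = (n : ℝ) - 1 - j := by
  unfold tailIndicator
  rw [Finset.sum_boole, Finset.filter_lt_eq_Ioi, Fin.card_Ioi, Nat.cast_sub
    (Nat.le_sub_one_of_lt j.isLt), Nat.cast_sub (Nat.one_le_of_lt j.isLt), Nat.cast_one]

lemma tailIndicator_dotProduct_of_le {k l : Fin n} (hkl : k ≤ l) :
    tailIndicator k ⬝ᵥ tailIndicator l = ∑ i, tailIndicator l i := by
  refine Finset.sum_congr rfl fun i _ => ?_
  simp only [tailIndicator]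
  split_ifs <;> first | exact absurd (hkl.trans_lt ‹_›) ‹_› | norm_num

lemma tailIndicator_succ_sub (i j : Fin n) (hi : (i : ℕ) + 1 < n) :
    tailIndicator j ⟨i + 1, hi⟩ - tailIndicator j i = if i = j then 1 else 0 := by
  simp only [tailIndicator, Fin.lt_def, Fin.ext_iff]
  split_ifs <;> first | (exfalso; omega) | norm_num

lemma Amat_dotProduct_of_lt (i : Fin n) (hi : (i : ℕ) + 1 < n) (v : Fin n → ℝ) :
    Amat n i ⬝ᵥ v = v ⟨i + 1, hi⟩ - v i := by
  have hrow : Amat n i = Pi.single ⟨i + 1, hi⟩ 1 - Pi.single i 1 := by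
    ext k
    simp only [Amat, of_apply, Pi.sub_apply, Pi.single_apply, Fin.ext_iff]
    split_ifs <;> first | (exfalso; omega) | norm_num
  rw [hrow, sub_dotProduct, single_dotProduct, single_dotProduct, one_mul, one_mul]

lemma Amat_dotProduct_of_eq (i : Fin n) (hi : (i : ℕ) = n - 1) (v : Fin n → ℝ) :
    Amat n i ⬝ᵥ v = ∑ k, v k := by
  have hrow : Amat n i = 1 := by
    ext k
    simp [Amat, hi]
  rw [hrow, one_dotProduct]

noncomputable def invAmatCol (n : ℕ) (j : Fin n) : Fin n → ℝ :=
  if (j : ℕ) = n - 1 then (1 / n : ℝ) • 1 else centered (tailIndicator j)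

noncomputable def invAmat (n : ℕ) : Matrix (Fin n) (Fin n) ℝ :=
  (Matrix.of (invAmatCol n))ᵀ

lemma transpose_invAmat_mul_invAmat_apply (k l : Fin n) :
    ((invAmat n)ᵀ * invAmat n) k l = invAmatCol n k ⬝ᵥ invAmatCol n l :=
  rfl

lemma invAmatCol_succ_sub (i j : Fin n) (hi : (i : ℕ) + 1 < n) :
    invAmatCol n j ⟨i + 1, hi⟩ - invAmatCol n j i = if i = j then 1 else 0 := by
  by_cases hj : (j : ℕ) = n - 1
  · have hij : i ≠ j := by rintro rfl; omega
    simp [invAmatCol, hj, hij]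
  · rw [invAmatCol, if_neg hj, centered_apply_sub_centered_apply, tailIndicator_succ_sub]

lemma invAmatCol_dotProduct_self_of_eq {j : Fin n} (hj : (j : ℕ) = n - 1) :
    invAmatCol n j ⬝ᵥ invAmatCol n j = 1 / n := by
  rw [invAmatCol, if_pos hj, smul_dotProduct, dotProduct_smul, one_dotProduct_one,
    Fintype.card_fin, smul_eq_mul, smul_eq_mul]
  field_simp

variable [NeZero n]

lemma sum_invAmatCol (j : Fin n) :
    ∑ i, invAmatCol n j i = if (j : ℕ) = n - 1 then 1 else 0 := by
  rw [← dotProduct_one, invAmatCol]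
  split_ifs
  · rw [smul_dotProduct, one_dotProduct_one, Fintype.card_fin, smul_eq_mul,
      one_div_mul_cancel (NeZero.ne _)]
  · exact centered_dotProduct_one _

lemma Amat_mul_invAmat : Amat n * invAmat n = 1 := by
  ext i j
  change Amat n i ⬝ᵥ invAmatCol n j = _
  rw [one_apply]
  by_cases hi : (i : ℕ) = n - 1
  · rw [Amat_dotProduct_of_eq i hi, sum_invAmatCol]
    simp only [Fin.ext_iff, hi, eq_comm]
  · rw [Amat_dotProduct_of_lt i (by omega)]
    exact invAmatCol_succ_sub i j _

lemma invAmatCol_dotProduct_of_le {k l : Fin n} (hkl : k ≤ l) (hl : (l : ℕ) < n - 1) :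
    invAmatCol n k ⬝ᵥ invAmatCol n l = ((k : ℕ) + 1 : ℝ) * (n - ((l : ℕ) + 1)) / n := by
  have hk : (k : ℕ) ≠ n - 1 := by rw [Fin.le_def] at hkl; omega
  have hn : (n : ℝ) ≠ 0 := NeZero.ne _
  rw [invAmatCol, invAmatCol, if_neg hk, if_neg hl.ne, centered_dotProduct_centered,
    tailIndicator_dotProduct_of_le hkl, sum_tailIndicator, sum_tailIndicator, Fintype.card_fin]
  field_simp
  ring

lemma invAmatCol_dotProduct_of_eq {k j : Fin n} (hk : (k : ℕ) < n - 1) (hj : (j : ℕ) = n - 1) :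
    invAmatCol n k ⬝ᵥ invAmatCol n j = 0 := by
  rw [invAmatCol, invAmatCol, if_neg hk.ne, if_pos hj, dotProduct_smul, centered_dotProduct_one,
    smul_zero]

end InvAmat

theorem stmt8 (n : ℕ) (hn : 0 < n) :
    IsUnit (Amat n) ∧
    ∀ M : Matrix (Fin n) (Fin n) ℝ, M = ((Amat n)⁻¹)ᵀ * (Amat n)⁻¹ →
      (∀ k l : Fin n, (k : ℕ) ≤ (l : ℕ) → (l : ℕ) < n - 1 →
          M k l = (((k : ℕ) : ℝ) + 1) * ((n : ℝ) - (((l : ℕ) : ℝ) + 1)) / (n : ℝ)) ∧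
      Mᵀ = M ∧
      M ⟨n - 1, by omega⟩ ⟨n - 1, by omega⟩ = 1 / (n : ℝ) ∧
      (∀ k : Fin n, (k : ℕ) < n - 1 →
          M k ⟨n - 1, by omega⟩ = 0 ∧ M ⟨n - 1, by omega⟩ k = 0) := by
  have : NeZero n := ⟨hn.ne'⟩
  refine ⟨IsUnit.of_mul_eq_one _ Amat_mul_invAmat, fun M hM => ?_⟩
  rw [inv_eq_right_inv Amat_mul_invAmat] at hM
  subst hM
  simp only [transpose_invAmat_mul_invAmat_apply]
  refine ⟨fun k l hkl hl => invAmatCol_dotProduct_of_le hkl hl, ?_,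
    invAmatCol_dotProduct_self_of_eq rfl,
    fun k hk => ⟨invAmatCol_dotProduct_of_eq hk rfl, ?_⟩⟩
  · rw [transpose_mul, transpose_transpose]
  · rw [dotProduct_comm, invAmatCol_dotProduct_of_eq hk rfl]
end

section
/- Let x, f, z ∈ ℝ^n and t > 0. Then det[exp(x_i (z_j/√t + f_j))]_{i,j=1}^n = Σ_{k=0}^∞ t^{−k/2} T_k(z), where T_k(z) = Σ_{k_1+...+k_n = k, k_j ≥ 0} (z_1^{k_1}···z_n^{k_n})/(k_1!···k_n!) · det[e^{x_i f_j} x_i^{k_j}]_{i,j=1}^n, and the series converges absolutely. -/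
/-!
Expand the determinant by the Leibniz formula. With `s = t^{-1/2}` and
`c_σ = Σ_j x_{σ j} z_j`, the permutation `σ` contributes
`sign σ · Π_j e^{x_{σ j} f_j} · e^{s c_σ}`. The `k`-th term `s^k c_σ^k / k!` of the exponential
series, expanded by the multinomial theorem, is `s^k` times the `σ`-term of the Leibniz expansions
of the determinants in `T_k(z)`. A finite sum of convergent series converges, and over `ℝ`
convergence of a series is unconditional, hence absolute.
-/

open Finset

/-- `T_k(z) = Σ_{k_1+...+k_n = k} (Π_j z_j^{k_j}/k_j!) · det[e^{x_i f_j} x_i^{k_j}]`. -/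
noncomputable def Tcoef (n : ℕ) (x f z : Fin n → ℝ) (k : ℕ) : ℝ :=
  ∑ κ ∈ (Fintype.piFinset fun _ : Fin n => Finset.range (k + 1)).filter
      (fun κ => ∑ j, κ j = k),
    (∏ j, z j ^ κ j / (Nat.factorial (κ j) : ℝ)) *
      Matrix.det (Matrix.of fun i j : Fin n => Real.exp (x i * f j) * x i ^ κ j)

open Nat

lemma filter_piFinset_range_sum_eq_piAntidiag (n k : ℕ) :
    (Fintype.piFinset fun _ : Fin n => range (k + 1)).filter (fun κ => ∑ j, κ j = k) =
      piAntidiag univ k := by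
  ext κ
  simp only [mem_filter, Fintype.mem_piFinset, mem_range, Nat.lt_succ_iff, mem_piAntidiag,
    mem_univ, implies_true, and_true]
  refine ⟨And.right, fun h => ⟨fun j => h ▸ single_le_sum (by simp) (mem_univ j), h⟩⟩

lemma sum_pow_div_factorial_eq_sum_piAntidiag {ι K : Type*} [DecidableEq ι] [Field K]
    [CharZero K] (s : Finset ι) (w : ι → K) (k : ℕ) :
    (∑ j ∈ s, w j) ^ k / k ! = ∑ κ ∈ piAntidiag s k, ∏ j ∈ s, w j ^ κ j / (κ j)! := by
  rw [sum_pow_eq_sum_piAntidiag, sum_div]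
  refine sum_congr rfl fun κ hκ => ?_
  have hspec : ((∏ j ∈ s, (κ j)! : ℕ) : K) * multinomial s κ = k ! := by
    rw [← Nat.cast_mul, multinomial_spec, (mem_piAntidiag.1 hκ).1]
  rw [prod_div_distrib, ← hspec]
  push_cast
  have : (multinomial s κ : K) ≠ 0 := Nat.cast_ne_zero.2 (multinomial_pos s κ).ne'
  have : ∏ j ∈ s, ((κ j)! : K) ≠ 0 := prod_ne_zero_iff.2 fun j _ => by simp [factorial_ne_zero]
  field_simp

lemma Tcoef_eq_sum_perm (n : ℕ) (x f z : Fin n → ℝ) (k : ℕ) :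
    Tcoef n x f z k = ∑ σ : Equiv.Perm (Fin n), ((Equiv.Perm.sign σ : ℤ) : ℝ) *
      ((∏ j, Real.exp (x (σ j) * f j)) * ((∑ j, x (σ j) * z j) ^ k / k !)) := by
  simp only [Tcoef, filter_piFinset_range_sum_eq_piAntidiag, Matrix.det_apply', Matrix.of_apply,
    mul_sum]
  rw [sum_comm]
  refine sum_congr rfl fun σ _ => ?_
  rw [sum_pow_div_factorial_eq_sum_piAntidiag, mul_sum, mul_sum]
  refine sum_congr rfl fun κ _ => ?_
  rw [mul_left_comm, ← prod_mul_distrib, ← prod_mul_distrib]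
  congr 1
  refine prod_congr rfl fun j _ => ?_
  ring

lemma hasSum_pow_mul_Tcoef (n : ℕ) (x f z : Fin n → ℝ) (s : ℝ) :
    HasSum (fun k => s ^ k * Tcoef n x f z k)
      (Matrix.det (Matrix.of fun i j : Fin n => Real.exp (x i * (s * z j + f j)))) := by
  simp only [Tcoef_eq_sum_perm, mul_sum, Matrix.det_apply', Matrix.of_apply]
  refine hasSum_sum fun σ _ => ?_
  have hprod : ∏ j, Real.exp (x (σ j) * (s * z j + f j)) =
      (∏ j, Real.exp (x (σ j) * f j)) * Real.exp (s * ∑ j, x (σ j) * z j) := by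
    rw [mul_sum, Real.exp_sum, ← prod_mul_distrib]
    exact prod_congr rfl fun j _ => by rw [← Real.exp_add]; ring_nf
  have hexp : HasSum (fun k => (s * ∑ j, x (σ j) * z j) ^ k / k !)
      (Real.exp (s * ∑ j, x (σ j) * z j)) := by
    rw [Real.exp_eq_exp_ℝ]
    exact NormedSpace.expSeries_div_hasSum_exp _
  rw [hprod, ← mul_assoc]
  exact (hexp.mul_left _).congr_fun fun k => by ring

theorem stmt11 (n : ℕ) (x f z : Fin n → ℝ) (t : ℝ) (ht : 0 < t) :
    HasSum (fun k : ℕ => t ^ (-(k : ℝ) / 2) * Tcoef n x f z k)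
      (Matrix.det
        (Matrix.of fun i j : Fin n => Real.exp (x i * (z j / Real.sqrt t + f j)))) ∧
    Summable (fun k : ℕ => |t ^ (-(k : ℝ) / 2) * Tcoef n x f z k|) := by
  have hpow (k : ℕ) : t ^ (-(k : ℝ) / 2) = (Real.sqrt t)⁻¹ ^ k := by
    rw [Real.sqrt_eq_rpow, ← Real.rpow_neg_one, ← Real.rpow_natCast, ← Real.rpow_mul ht.le,
      ← Real.rpow_mul ht.le]
    ring_nf
  have h := hasSum_pow_mul_Tcoef n x f z (Real.sqrt t)⁻¹
  simp only [← hpow, ← div_eq_inv_mul] at h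
  exact ⟨h, h.summable.abs⟩
end
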